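/- The category of sets satisfies the transfinite transitivity property: let γ be a cardinal, let T be the poset of functions f : β → γ for ordinals β ≤ γ ordered by restriction, and let C be a contravariant functor from T to sets, assigning a set C_f to each node f and a map h_{g,f} : C_g → C_f whenever f is a restriction of g, functorially. Suppose (i) for every ordinal β < γ and every f : β → γ, every element of C_f lies in the image of h_{g,f} : C_g → C_f for some g : β+1 → γ extending f (the family of immediate successors is jointly surjective), and (ii) for every limit ordinal β ≤ γ and every f : β → γ, the maps h_{f, f|α} : C_f → C_{f|α} (α < β) exhibit C_f as the inverse limit of the sets C_{f|α}, i.e., the induced map from C_f to the set of compatible families (x_α)_{α<β} is a bijection. Then for every x ∈ C_∅ there exist a function f : γ → γ and an element y ∈ C_{f} with h_{f,∅}(y) = x; that is, the transfinite composites {C_f → C_∅ : f : γ → γ} form a jointly surjective family. -/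

import Mathlib

/-!
Zorn's lemma, applied to the elements of `C` over all nodes of the tree, preordered by
restriction. Along a chain, the heights have a supremum; if it is not attained it is a limit
ordinal, the chain induces a compatible family below it, and the inverse-limit condition lifts
that family to an upper bound. A maximal element lies over a node of full height `γ`, since
otherwise the successor condition would extend it.
-/

universe u

def resFn {o β α : Ordinal} (h : α ≤ β) (f : Set.Iio β → Set.Iio o) :
    Set.Iio α → Set.Iio o :=
  fun x => f ⟨x.1, lt_of_lt_of_le x.2 h⟩

def emptyFn (o : Ordinal) : Set.Iio (0 : Ordinal) → Set.Iio o :=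
  fun t => absurd t.2 (not_lt_zero (a := t.1))

lemma resFn_zero {o β : Ordinal} (h : (0 : Ordinal) ≤ β) (f : Set.Iio β → Set.Iio o) :
    resFn h f = emptyFn o :=
  funext fun t => absurd t.2 (not_lt_zero (a := t.1))

open Order

/-- A contravariant functor from the tree of functions `β → o` (`β ≤ o`), ordered by restriction,
to types. -/
structure TreePresheaf (o : Ordinal.{u}) where
  obj : (β : Set.Iic o) → (Set.Iio β.1 → Set.Iio o) → Type u
  map : ∀ (β₁ β₂ : Set.Iic o) (h12 : β₁.1 ≤ β₂.1) (f : Set.Iio β₂.1 → Set.Iio o),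
    obj β₂ f → obj β₁ (resFn h12 f)
  map_id : ∀ (β : Set.Iic o) (f : Set.Iio β.1 → Set.Iio o) (x : obj β f),
    map β β le_rfl f x = x
  map_comp : ∀ (β₁ β₂ β₃ : Set.Iic o) (h12 : β₁.1 ≤ β₂.1) (h23 : β₂.1 ≤ β₃.1)
    (f : Set.Iio β₃.1 → Set.Iio o) (x : obj β₃ f),
    map β₁ β₂ h12 (resFn h23 f) (map β₂ β₃ h23 f x) = map β₁ β₃ (h12.trans h23) f x

namespace TreePresheaf

variable {o : Ordinal.{u}}

abbrev ofIio {β : Set.Iic o} (α : Set.Iio β.1) : Set.Iic o :=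
  ⟨α.1, Set.mem_Iic.mpr (lt_of_lt_of_le α.2 β.2).le⟩

variable (F : TreePresheaf o)

def Layer (β : Set.Iic o) : Type (u + 1) := Σ f : Set.Iio β.1 → Set.Iio o, F.obj β f

def Elem : Type (u + 1) := Σ β : Set.Iic o, F.Layer β

variable {F}

def Layer.res {β₁ β₂ : Set.Iic o} (h12 : β₁.1 ≤ β₂.1) (p : F.Layer β₂) : F.Layer β₁ :=
  ⟨resFn h12 p.1, F.map β₁ β₂ h12 p.1 p.2⟩

lemma Layer.res_refl {β : Set.Iic o} (p : F.Layer β) : p.res le_rfl = p :=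
  congrArg (Sigma.mk p.1) (F.map_id β p.1 p.2)

lemma Layer.res_res {β₁ β₂ β₃ : Set.Iic o} (h12 : β₁.1 ≤ β₂.1) (h23 : β₂.1 ≤ β₃.1)
    (p : F.Layer β₃) : (p.res h23).res h12 = p.res (h12.trans h23) :=
  congrArg (Sigma.mk _) (F.map_comp β₁ β₂ β₃ h12 h23 p.1 p.2)

instance : Preorder F.Elem where
  le p q := ∃ h : p.1.1 ≤ q.1.1, q.2.res h = p.2
  le_refl p := ⟨le_rfl, p.2.res_refl⟩
  le_trans _ _ _ := fun ⟨h12, e12⟩ ⟨h23, e23⟩ =>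
    ⟨h12.trans h23, by rw [← Layer.res_res h12 h23, e23, e12]⟩

lemma res_eq_res_of_le {p q : F.Elem} (hpq : p ≤ q) {δ : Set.Iic o} (hδp : δ.1 ≤ p.1.1)
    (hδq : δ.1 ≤ q.1.1) : q.2.res hδq = p.2.res hδp := by
  obtain ⟨hle, e⟩ := hpq
  rw [← e, Layer.res_res]

lemma res_eq_res_of_isChain {c : Set F.Elem} (hc : IsChain (· ≤ ·) c) {p q : F.Elem}
    (hp : p ∈ c) (hq : q ∈ c) {δ : Set.Iic o} (hδp : δ.1 ≤ p.1.1) (hδq : δ.1 ≤ q.1.1) :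
    p.2.res hδp = q.2.res hδq :=
  (hc.total hp hq).elim (fun h => (res_eq_res_of_le h hδp hδq).symm)
    (fun h => res_eq_res_of_le h hδq hδp)

lemma eq_of_le_of_height_le {p q : F.Elem} (hpq : p ≤ q) (hqp : q.1.1 ≤ p.1.1) : p = q := by
  obtain ⟨β, p⟩ := p
  obtain ⟨β', q⟩ := q
  obtain ⟨hle, e⟩ := hpq
  obtain rfl : β = β' := Subtype.ext (le_antisymm hle hqp)
  change Layer.res hle q = p at e
  change (⟨β, p⟩ : Σ β, F.Layer β) = ⟨β, q⟩
  rw [← e, Layer.res_refl]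

variable (F)

def LiftsSucc : Prop :=
  ∀ (β : Ordinal) (hβ : β < o) (p : F.Layer ⟨β, hβ.le⟩),
    ∃ q : F.Layer ⟨β + 1, Order.add_one_le_iff.mpr hβ⟩, q.res le_self_add = p

def LiftsLimits : Prop :=
  ∀ (β : Set.Iic o), IsSuccLimit β.1 → ∀ (f : Set.Iio β.1 → Set.Iio o)
    (u : (α : Set.Iio β.1) → F.obj (ofIio α) (resFn (le_of_lt α.2) f)),
    (∀ (α₁ α₂ : Set.Iio β.1) (h12 : α₁.1 ≤ α₂.1),
      F.map (ofIio α₁) (ofIio α₂) h12 (resFn (le_of_lt α₂.2) f) (u α₂) = u α₁) →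
    ∃ x : F.obj β f, ∀ α : Set.Iio β.1, F.map (ofIio α) β (le_of_lt α.2) f x = u α

variable {F}

lemma height_eq_of_isMax (hs : F.LiftsSucc) {m : F.Elem} (hm : IsMax m) : m.1.1 = o := by
  obtain ⟨⟨β, hβo⟩, p⟩ := m
  refine (Set.mem_Iic.mp hβo).lt_or_eq.resolve_left fun hβ => ?_
  obtain ⟨q, hq⟩ := hs β hβ p
  obtain ⟨hle, -⟩ := hm (b := ⟨_, q⟩) ⟨le_self_add, hq⟩
  exact (lt_add_one β).not_ge hle

lemma LiftsLimits.exists_res_eq (hl : F.LiftsLimits) {β : Set.Iic o} (hβ : IsSuccLimit β.1)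
    (s : ∀ α : Set.Iio β.1, F.Layer (ofIio α))
    (hcompat : ∀ (α₁ α₂ : Set.Iio β.1) (h12 : α₁.1 ≤ α₂.1), (s α₂).res h12 = s α₁) :
    ∃ p : F.Layer β, ∀ α : Set.Iio β.1, p.res (le_of_lt α.2) = s α := by
  let f : Set.Iio β.1 → Set.Iio o := fun ι => (s ⟨succ ι.1, hβ.succ_lt ι.2⟩).1 ⟨ι.1, lt_succ ι.1⟩
  have hf : ∀ α : Set.Iio β.1, resFn (le_of_lt α.2) f = (s α).1 := fun α => funext fun ι =>
    congrFun (congrArg Sigma.fst (hcompat ⟨succ ι.1, hβ.succ_lt (lt_trans ι.2 α.2)⟩ α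
      (succ_le_of_lt ι.2))).symm ⟨ι.1, lt_succ ι.1⟩
  let u (α : Set.Iio β.1) : F.obj (ofIio α) (resFn (le_of_lt α.2) f) :=
    cast (congrArg _ (hf α).symm) (s α).2
  have hu : ∀ α, (⟨_, u α⟩ : F.Layer (ofIio α)) = s α := fun α => Sigma.ext (hf α) (cast_heq _ _)
  obtain ⟨x, hx⟩ := hl β hβ f u fun α₁ α₂ h12 => sigma_mk_injective <|
    show Layer.res h12 ⟨_, u α₂⟩ = ⟨_, u α₁⟩ by rw [hu, hu, hcompat]
  exact ⟨⟨f, x⟩, fun α => (congrArg (Sigma.mk _) (hx α)).trans (hu α)⟩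

lemma LiftsLimits.exists_le_of_isChain (hl : F.LiftsLimits) {c : Set F.Elem}
    (hc : IsChain (· ≤ ·) c) {β : Set.Iic o} (hβ : IsSuccLimit β.1) (hlt : ∀ p ∈ c, p.1.1 < β.1)
    (hcof : ∀ α < β.1, ∃ p ∈ c, α < p.1.1) : ∃ P : F.Layer β, ∀ p ∈ c, p ≤ ⟨β, P⟩ := by
  choose pick hpick_mem hpick_lt using hcof
  obtain ⟨P, hP⟩ := hl.exists_res_eq hβ (fun α => (pick α.1 α.2).2.res (hpick_lt α.1 α.2).le)
    fun α₁ α₂ h12 => by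
      rw [Layer.res_res]
      exact res_eq_res_of_isChain hc (hpick_mem _ _) (hpick_mem _ _) _ _
  refine ⟨P, fun p hp => ⟨(hlt p hp).le, ?_⟩⟩
  calc P.res _ = (pick p.1.1 (hlt p hp)).2.res (hpick_lt _ _).le := hP ⟨p.1.1, hlt p hp⟩
    _ = p.2.res le_rfl := res_eq_res_of_isChain hc (hpick_mem _ _) hp _ _
    _ = p.2 := p.2.res_refl

lemma LiftsLimits.bddAbove_of_isChain (hl : F.LiftsLimits) {c : Set F.Elem}
    (hc : IsChain (· ≤ ·) c) (hne : c.Nonempty) : BddAbove c := by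
  let heights : Set Ordinal := (fun p : F.Elem => p.1.1) '' c
  have hbound : ∀ b ∈ heights, b ≤ o := by rintro _ ⟨p, -, rfl⟩; exact p.1.2
  have hle : ∀ p ∈ c, p.1.1 ≤ sSup heights := fun p hp => le_csSup ⟨o, hbound⟩ ⟨p, hp, rfl⟩
  by_cases hmem : sSup heights ∈ heights
  · obtain ⟨p, hp, hpB⟩ := hmem
    exact ⟨p, fun q hq => (hc.total hq hp).elim id
      fun hpq => (eq_of_le_of_height_le hpq ((hle q hq).trans hpB.ge)).ge⟩
  have hlim : IsSuccLimit (sSup heights) :=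
    not_not.mp fun h => hmem (csSup_mem_of_not_isSuccLimit (hne.image _) ⟨o, hbound⟩ h)
  have hcof : ∀ α < sSup heights, ∃ p ∈ c, α < p.1.1 := fun α hα => by
    obtain ⟨_, ⟨p, hp, rfl⟩, hαp⟩ := exists_lt_of_lt_csSup (hne.image _) hα
    exact ⟨p, hp, hαp⟩
  obtain ⟨P, hP⟩ := hl.exists_le_of_isChain hc
    (β := ⟨_, Set.mem_Iic.mpr (csSup_le (hne.image _) hbound)⟩) hlim
    (fun p hp => (hle p hp).lt_of_ne fun e => hmem (e ▸ ⟨p, hp, rfl⟩)) hcof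
  exact ⟨_, hP⟩

theorem exists_le_height_eq (hs : F.LiftsSucc) (hl : F.LiftsLimits) (p : F.Elem) :
    ∃ q : F.Elem, p ≤ q ∧ q.1.1 = o := by
  obtain ⟨m, hpm, hm⟩ := zorn_le_nonempty_Ici₀ p
    (fun c _ hc y hy => hl.bddAbove_of_isChain hc ⟨y, hy⟩) p le_rfl
  exact ⟨m, hpm, height_eq_of_isMax hs hm⟩

end TreePresheaf

/-- The category of sets satisfies the transfinite transitivity property: given a
contravariant functor `C` on the tree of functions `f : β → γ` (`β ≤ γ`) ordered by
restriction, such that at each node the maps from its immediate successors are jointly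
surjective, and at each limit node the set is the inverse limit of its predecessors, every
element of the root `C_∅` is in the image of `C_f → C_∅` for some branch `f : γ → γ`. -/
theorem Set_transfinite_transitivity (γ : Cardinal.{u})
    (C : (β : Set.Iic γ.ord) → (Set.Iio β.1 → Set.Iio γ.ord) → Type u)
    (h : ∀ (β₁ β₂ : Set.Iic γ.ord) (h12 : β₁.1 ≤ β₂.1) (f : Set.Iio β₂.1 → Set.Iio γ.ord),
      C β₂ f → C β₁ (resFn h12 f))
    (hid : ∀ (β : Set.Iic γ.ord) (f : Set.Iio β.1 → Set.Iio γ.ord) (x : C β f),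
      h β β le_rfl f x = x)
    (hcomp : ∀ (β₁ β₂ β₃ : Set.Iic γ.ord) (h12 : β₁.1 ≤ β₂.1) (h23 : β₂.1 ≤ β₃.1)
      (f : Set.Iio β₃.1 → Set.Iio γ.ord) (x : C β₃ f),
      h β₁ β₂ h12 (resFn h23 f) (h β₂ β₃ h23 f x) = h β₁ β₃ (h12.trans h23) f x)
    (hsucc : ∀ (β : Ordinal) (hβ : β < γ.ord) (f : Set.Iio β → Set.Iio γ.ord)
      (x : C ⟨β, Set.mem_Iic.mpr (le_of_lt hβ)⟩ f),
      ∃ (g : Set.Iio (β + 1) → Set.Iio γ.ord)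
        (hg : resFn (le_self_add : β ≤ β + 1) g = f)
        (y : C ⟨β + 1, Set.mem_Iic.mpr (Order.add_one_le_iff.mpr hβ)⟩ g),
        hg ▸ h ⟨β, Set.mem_Iic.mpr (le_of_lt hβ)⟩
            ⟨β + 1, Set.mem_Iic.mpr (Order.add_one_le_iff.mpr hβ)⟩
            (le_self_add : β ≤ β + 1) g y = x)
    (hlim : ∀ (β : Set.Iic γ.ord), Order.IsSuccLimit β.1 →
      ∀ (f : Set.Iio β.1 → Set.Iio γ.ord)
        (u : (α : Set.Iio β.1) →
          C ⟨α.1, Set.mem_Iic.mpr (le_of_lt (lt_of_lt_of_le α.2 β.2))⟩ (resFn (le_of_lt α.2) f)),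
        (∀ (α₁ α₂ : Set.Iio β.1) (h12 : α₁.1 ≤ α₂.1),
          h ⟨α₁.1, Set.mem_Iic.mpr (le_of_lt (lt_of_lt_of_le α₁.2 β.2))⟩
            ⟨α₂.1, Set.mem_Iic.mpr (le_of_lt (lt_of_lt_of_le α₂.2 β.2))⟩
            h12 (resFn (le_of_lt α₂.2) f) (u α₂) = u α₁) →
        ∃! x : C β f, ∀ α : Set.Iio β.1,
          h ⟨α.1, Set.mem_Iic.mpr (le_of_lt (lt_of_lt_of_le α.2 β.2))⟩ β
            (le_of_lt α.2) f x = u α) :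
    ∀ x : C ⟨0, Set.mem_Iic.mpr (zero_le : (0 : Ordinal) ≤ γ.ord)⟩ (emptyFn γ.ord),
      ∃ (f : Set.Iio γ.ord → Set.Iio γ.ord) (y : C ⟨γ.ord, Set.mem_Iic.mpr le_rfl⟩ f),
        (resFn_zero (zero_le : (0 : Ordinal) ≤ γ.ord) f) ▸
            h ⟨0, Set.mem_Iic.mpr (zero_le : (0 : Ordinal) ≤ γ.ord)⟩ ⟨γ.ord, Set.mem_Iic.mpr le_rfl⟩
              (zero_le : (0 : Ordinal) ≤ γ.ord) f y = x := by
  intro x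
  let F : TreePresheaf γ.ord := ⟨C, h, hid, hcomp⟩
  have hs : F.LiftsSucc := by
    rintro β hβ ⟨f, x⟩
    obtain ⟨g, rfl, y, rfl⟩ := hsucc β hβ f x
    exact ⟨⟨g, y⟩, rfl⟩
  obtain ⟨⟨⟨β, hβ⟩, f, y⟩, ⟨_, hroot⟩, hβo⟩ := F.exists_le_height_eq hs
    (fun β hβ f u hu => (hlim β hβ f u hu).exists) ⟨⟨0, Set.mem_Iic.mpr zero_le⟩, emptyFn _, x⟩
  obtain rfl : β = γ.ord := hβo
  refine ⟨f, y, ?_⟩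
  exact eq_of_heq ((eqRec_heq _ _).trans (Sigma.ext_iff.mp hroot).2)
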